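/- arXiv:0708.1491 — 2 statements merged into one kernel-verified Lean document; each statement's English description precedes it below -/
import Mathlib

section
/- For every integer n ≥ 1 and every n-chain x, the iterates s^[k](x) are n-chains for all k ≥ 1 if and only if x ∈ 𝒩 and n ≥ 4; moreover, in that case s^[k](x) ∈ 𝒩 for all k ≥ 1. -/
/-- The counting operator: `countOp n x j` is the number of indices `i` with `x i = j`. -/
def countOp (n : ℕ) (x : Fin n → ℕ) : Fin n → ℕ :=
  fun j => (Finset.univ.filter fun i => x i = (j : ℕ)).card

/-- `𝒩`: the set of `n`-chains that are neither constant nor injective. -/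
def NSet (n : ℕ) : Set (Fin n → ℕ) :=
  {x | (∀ i, x i < n) ∧ (¬ ∃ c, ∀ i, x i = c) ∧ ¬ Function.Injective x}

/-!
Since an `n`-chain `x` has `n` entries, `s(x)` sums to `n`. Hence `s(x)` is a chain unless `x`
is constant (then one count is `n`), and `s(x)` is constant exactly when `x` is injective (the
constant must be `1`). An injective chain is a permutation of `0, …, n - 1`, with sum
`n(n - 1)/2`, which equals `n` only for `n = 3`. So for `n ≥ 4` the operator `s` maps `𝒩` into
itself. Conversely, if all iterates are chains then neither `x` nor `s(x)` is constant, so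
`x ∈ 𝒩`, which needs three indices (two with equal entries, one with a different entry). For
`n = 3` the non-constant `3`-chain `s(x)` with sum `3` is a permutation of `(0, 1, 2)`, so
`s²(x)` is constant and `s³(x)` is not a chain.
-/

open Finset Function

def IsNChain (n : ℕ) (x : Fin n → ℕ) : Prop := ∀ i, x i < n

variable {n : ℕ} {x : Fin n → ℕ}

lemma sum_countOp (hx : IsNChain n x) : ∑ j, countOp n x j = n := by
  have hfiber (j : Fin n) : countOp n x j = #{i | (⟨x i, hx i⟩ : Fin n) = j} := by
    simp only [countOp, Fin.ext_iff]
  simp only [hfiber, ← card_eq_sum_card_fiberwise (fun i _ => mem_coe.2 (mem_univ _)),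
    card_univ, Fintype.card_fin]

lemma countOp_eq_iff_forall_eq (j : Fin n) : countOp n x j = n ↔ ∀ i, x i = j := by
  simpa [countOp] using card_filter_eq_iff (s := univ) (p := fun i => x i = (j : ℕ))

lemma isNChain_countOp_iff (hn : 1 ≤ n) (hx : IsNChain n x) :
    IsNChain n (countOp n x) ↔ ¬ ∃ c, ∀ i, x i = c := by
  constructor
  · rintro hs ⟨c, hc⟩
    have hcn : c < n := hc ⟨0, hn⟩ ▸ hx ⟨0, hn⟩
    exact (hs ⟨c, hcn⟩).ne ((countOp_eq_iff_forall_eq _).2 hc)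
  · intro hnc j
    refine (card_filter_le _ _).trans_eq (card_fin n) |>.lt_of_ne ?_
    exact fun h => hnc ⟨j, (countOp_eq_iff_forall_eq j).1 h⟩

lemma countOp_const_iff_injective (hx : IsNChain n x) :
    (∃ c, ∀ j, countOp n x j = c) ↔ Injective x := by
  constructor
  · rintro ⟨c, hc⟩
    rcases Nat.eq_zero_or_pos n with rfl | hn
    · exact injective_of_subsingleton x
    have hc1 : c = 1 := by
      have hsum := sum_countOp hx
      simp only [hc, sum_const, card_univ, Fintype.card_fin, smul_eq_mul] at hsum
      exact (Nat.mul_eq_left hn.ne').1 hsum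
    intro a b hab
    have hfiber : #{i | x i = x a} ≤ 1 := (hc ⟨x a, hx a⟩).trans_le hc1.le
    exact card_le_one.1 hfiber _ (by simp) _ (by simpa using hab.symm)
  · intro hinj
    refine ⟨1, fun j => le_antisymm ?_ ?_⟩
    · exact card_le_one.2 fun a ha b hb =>
        hinj ((mem_filter.1 ha).2.trans (mem_filter.1 hb).2.symm)
    · have hsurj : Surjective fun i => (⟨x i, hx i⟩ : Fin n) :=
        Finite.surjective_of_injective fun a b h => hinj (Fin.ext_iff.1 h)
      obtain ⟨i, hi⟩ := hsurj j
      exact card_pos.2 ⟨i, by simp [← hi]⟩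

lemma sum_eq_sum_range_of_injective (hx : IsNChain n x) (hinj : Injective x) :
    ∑ i, x i = ∑ i ∈ range n, i := by
  have himage : univ.image x = range n :=
    eq_of_subset_of_card_le
      (fun _ h => by obtain ⟨i, -, rfl⟩ := mem_image.1 h; exact mem_range.2 (hx i))
      (by simp [card_image_of_injective _ hinj])
  rw [← himage, sum_image fun a _ b _ h => hinj h]

lemma not_injective_of_sum_eq (hn : 4 ≤ n) (hx : IsNChain n x) (hsum : ∑ i, x i = n) :
    ¬ Injective x := by
  intro hinj
  have h := sum_range_id_mul_two n
  rw [← sum_eq_sum_range_of_injective hx hinj, hsum] at h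
  have : n * 3 ≤ n * (n - 1) := Nat.mul_le_mul_left n (by omega)
  omega

lemma injective_of_sum_eq_three {y : Fin 3 → ℕ} (hy : IsNChain 3 y) (hsum : ∑ i, y i = 3)
    (hnc : ¬ ∃ c, ∀ i, y i = c) : Injective y := by
  rw [Fin.sum_univ_three] at hsum
  have := hy 0; have := hy 1; have := hy 2
  have hconst : y 0 = y 1 ∨ y 0 = y 2 ∨ y 1 = y 2 → ∃ c, ∀ i, y i = c :=
    fun _ => ⟨1, fun i => by fin_cases i <;> simp <;> omega⟩
  intro a b hab
  fin_cases a <;> fin_cases b <;> simp at hab ⊢ <;> exact hnc (hconst (by omega))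

lemma three_le_of_mem_NSet (hx : x ∈ NSet n) : 3 ≤ n := by
  obtain ⟨-, hnc, hninj⟩ := hx
  obtain ⟨a, b, hab, hne⟩ := not_injective_iff.1 hninj
  obtain ⟨i, hi⟩ : ∃ i, x i ≠ x a := not_forall.1 (not_exists.1 hnc (x a))
  have hia : i ≠ a := fun h => hi (h ▸ rfl)
  have hib : i ≠ b := fun h => hi (h ▸ hab.symm)
  have := i.isLt; have := a.isLt; have := b.isLt
  simp only [ne_eq, Fin.ext_iff] at hia hib hne
  omega

lemma mapsTo_countOp_NSet (hn : 4 ≤ n) : Set.MapsTo (countOp n) (NSet n) (NSet n) := by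
  rintro x ⟨hx, hnc, hninj⟩
  have hs : IsNChain n (countOp n x) := (isNChain_countOp_iff (by omega) hx).2 hnc
  exact ⟨hs, fun h => hninj ((countOp_const_iff_injective hx).1 h),
    not_injective_of_sum_eq hn hs (sum_countOp hx)⟩

theorem iterates_isChain_iff (n : ℕ) (hn : 1 ≤ n) (x : Fin n → ℕ) (hx : ∀ i, x i < n) :
    ((∀ k, 1 ≤ k → ∀ j, (countOp n)^[k] x j < n) ↔ (x ∈ NSet n ∧ 4 ≤ n)) ∧
    (x ∈ NSet n → 4 ≤ n → ∀ k, 1 ≤ k → (countOp n)^[k] x ∈ NSet n) := by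
  refine ⟨⟨fun H => ?_, fun ⟨hN, h4⟩ k _ => ((mapsTo_countOp_NSet h4).iterate k hN).1⟩,
    fun hN h4 k _ => (mapsTo_countOp_NSet h4).iterate k hN⟩
  have h1 : IsNChain n (countOp n x) := H 1 le_rfl
  have h2 : IsNChain n (countOp n (countOp n x)) := H 2 (by norm_num)
  have h3 : IsNChain n (countOp n (countOp n (countOp n x))) := H 3 (by norm_num)
  have hs_nc := (isNChain_countOp_iff hn h1).1 h2
  have hN : x ∈ NSet n := ⟨hx, (isNChain_countOp_iff hn hx).1 h1,
    fun hinj => hs_nc ((countOp_const_iff_injective hx).2 hinj)⟩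
  refine ⟨hN, ?_⟩
  obtain h4 | rfl : 4 ≤ n ∨ n = 3 := by have := three_le_of_mem_NSet hN; omega
  · exact h4
  · have hs_inj := injective_of_sum_eq_three h1 (sum_countOp hx) hs_nc
    exact absurd ((countOp_const_iff_injective h1).2 hs_inj) ((isNChain_countOp_iff hn h2).1 h3)
end

section
/- For every integer n ≥ 1, two n-chains x and x' with x ≠ x' form a pair of amicable chains (i.e., s(x) = x' and s(x') = x) if and only if, up to swapping x and x', one of the following holds: (a) n = 6, x = (2,3,0,1,0,0) and x' = (3,1,1,1,0,0); (b) n ≥ 8, x satisfies x_0 = n−4, x_1 = 3, x_{n−3} = 1 and x_j = 0 for every other index j, and x' satisfies x'_0 = n−3, x'_1 = 1, x'_3 = 1, x'_{n−4} = 1 and x'_j = 0 for every other index j. -/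
/-- The case `n = 6`: the amicable pair `(2,3,0,1,0,0)`, `(3,1,1,1,0,0)`. -/
def amicableCaseA (n : ℕ) (x x' : Fin n → ℕ) : Prop :=
  n = 6 ∧ (∀ i : Fin n, x i = [2, 3, 0, 1, 0, 0].getD (i : ℕ) 0) ∧
    (∀ i : Fin n, x' i = [3, 1, 1, 1, 0, 0].getD (i : ℕ) 0)

/-- The case `n ≥ 8`: the amicable pair `(n-4,3,0,…,0,1,0,0)`, `(n-3,1,0,1,…,1,0,0,0)`. -/
def amicableCaseB (n : ℕ) (x x' : Fin n → ℕ) : Prop :=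
  8 ≤ n ∧
    (∀ i : Fin n, x i =
      if (i : ℕ) = 0 then n - 4
      else if (i : ℕ) = 1 then 3
      else if (i : ℕ) = n - 3 then 1
      else 0) ∧
    (∀ i : Fin n, x' i =
      if (i : ℕ) = 0 then n - 3
      else if (i : ℕ) = 1 then 1
      else if (i : ℕ) = 3 then 1
      else if (i : ℕ) = n - 4 then 1
      else 0)

/-!
Write `E(y) = ∑_{i ≠ 0} (y i - 1)` (truncated subtraction). If `x` and `x'` are amicable, then
`∑ x = ∑ x' = n`, and since `x' 0` counts the zeros of `x`, `(x 0 - 1) + E(x) = x' 0`; symmetrically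
`(x' 0 - 1) + E(x') = x 0`. Both `x 0` and `x' 0` are positive, so `E(x) + E(x') = 2`.

If `E(x') = 0`, then `x' 0 = x 0 + 1` and `x = s(x')` vanishes at every `j ≥ 2` except `x (x' 0) = 1`.
The identity for `x` then gives `x 1 = 3` and the first moment `∑ j * x j = ∑ x' = n` gives
`n = x' 0 + 3`; this is the pair of case (b), except for `n = 5, 6, 7`, which are computed.

If `E(x) = E(x') = 1`, then `x 0 = x' 0`, and `x = s(x')` and `x' = s(x)` agree at every `j ≥ 2`.
Two functions that agree at every `j ≥ 2` and have the same sum and the same first moment are equal,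
so `x = x'`.
-/

open Finset

theorem Finset.sum_tsub_one_add_card {ι : Type*} (s : Finset ι) (f : ι → ℕ) :
    ∑ i ∈ s, (f i - 1) + #s = ∑ i ∈ s, f i + #{i ∈ s | f i = 0} := by
  rw [card_filter, card_eq_sum_ones, ← sum_add_distrib, ← sum_add_distrib]
  exact sum_congr rfl fun i _ => by split_ifs <;> omega

theorem Finset.exists_eq_two_of_sum_tsub_one_eq_one {ι : Type*} {s : Finset ι} {f : ι → ℕ}
    (h : ∑ i ∈ s, (f i - 1) = 1) : ∃ i ∈ s, f i = 2 ∧ ∀ j ∈ s, j ≠ i → f j ≤ 1 := by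
  classical
  obtain ⟨i, hi, hfi⟩ : ∃ i ∈ s, f i - 1 ≠ 0 := by
    by_contra! h0
    rw [sum_eq_zero h0] at h
    exact zero_ne_one h
  rw [← add_sum_erase s _ hi] at h
  refine ⟨i, hi, by omega, fun j hj hji => ?_⟩
  have := sum_eq_zero_iff.mp (by omega : ∑ j ∈ s.erase i, (f j - 1) = 0) j
    (mem_erase.mpr ⟨hji, hj⟩)
  omega

theorem Fin.sum_ite_val_eq {n k : ℕ} (hk : k < n) (c : ℕ) :
    ∑ i : Fin n, (if (i : ℕ) = k then c else 0) = c := by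
  rw [Fin.sum_univ_eq_sum_range (fun i => if i = k then c else 0), sum_ite_eq',
    if_pos (mem_range.mpr hk)]

section Counting

variable {n : ℕ} {y : Fin n → ℕ}

theorem countOp_eq_card_fiber (hy : ∀ i, y i < n) (j : Fin n) :
    countOp n y j = #{i | (⟨y i, hy i⟩ : Fin n) = j} := by
  simp only [countOp, Fin.ext_iff]

theorem sum_countOp_s10 (hy : ∀ i, y i < n) : ∑ j, countOp n y j = n := by
  simp only [countOp_eq_card_fiber hy]
  rw [← card_eq_sum_card_fiberwise fun i _ => mem_univ _, card_univ, Fintype.card_fin]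

theorem sum_mul_countOp (hy : ∀ i, y i < n) :
    ∑ j : Fin n, (j : ℕ) * countOp n y j = ∑ i, y i := by
  simp only [countOp_eq_card_fiber hy, mul_comm _ (#_), ← smul_eq_mul, ← sum_const]
  exact sum_fiberwise' univ (fun i => (⟨y i, hy i⟩ : Fin n)) (fun j => (j : ℕ))

theorem countOp_zero [NeZero n] : countOp n y 0 = #{i | y i = 0} := by
  rw [countOp, Fin.val_zero]

theorem countOp_eq_card_filter_of_le_one (S : Finset (Fin n)) (hS : ∀ i ∉ S, y i ≤ 1)
    {j : Fin n} (hj : 2 ≤ (j : ℕ)) : countOp n y j = #{i ∈ S | y i = j} := by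
  unfold countOp
  congr 1
  ext i
  simp only [mem_filter, mem_univ, true_and, iff_and_self]
  intro hi
  by_contra hiS
  have := hS i hiS
  omega

theorem countOp_eq_ite_of_le_one {p : Fin n} (hle : ∀ i ≠ p, y i ≤ 1) {j : Fin n}
    (hj : 2 ≤ (j : ℕ)) : countOp n y j = if y p = j then 1 else 0 := by
  rw [countOp_eq_card_filter_of_le_one {p} (by simpa using hle) hj, card_filter, sum_singleton]

theorem countOp_eq_ite_add_ite_of_le_one {p q : Fin n} (hpq : p ≠ q)
    (hle : ∀ i, i ≠ p → i ≠ q → y i ≤ 1) {j : Fin n} (hj : 2 ≤ (j : ℕ)) :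
    countOp n y j = (if y p = j then 1 else 0) + (if y q = j then 1 else 0) := by
  rw [countOp_eq_card_filter_of_le_one {p, q} (by simpa using hle) hj, card_filter,
    sum_pair hpq]

theorem countOp_zero_pos [NeZero n] (h1 : 1 < n) (hsum : ∑ i, y i = n)
    (hlt : countOp n y ⟨1, h1⟩ < n) : 0 < countOp n y 0 := by
  by_contra! h0
  rw [countOp_zero, Nat.le_zero, card_eq_zero, filter_eq_empty_iff] at h0
  have hex := sum_tsub_one_add_card univ y
  rw [hsum, filter_false_of_mem h0, card_empty, card_univ, Fintype.card_fin] at hex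
  have hone (i : Fin n) : y i = 1 := by
    have := sum_eq_zero_iff.mp (by omega : ∑ i, (y i - 1) = 0) i (mem_univ i)
    have := @h0 i (mem_univ i)
    omega
  simp [countOp, hone] at hlt

theorem tsub_one_add_sum_erase_zero [NeZero n] (hsum : ∑ i, y i = n) :
    (y 0 - 1) + ∑ i ∈ univ.erase 0, (y i - 1) = countOp n y 0 := by
  rw [add_sum_erase _ (fun i => y i - 1) (mem_univ 0), countOp_zero]
  have hex := sum_tsub_one_add_card univ y
  rw [hsum, card_univ, Fintype.card_fin] at hex
  omega

theorem eq_of_sum_eq_of_sum_mul_eq {u v : Fin n → ℕ} (h : ∀ j : Fin n, 2 ≤ (j : ℕ) → u j = v j)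
    (hsum : ∑ j, u j = ∑ j, v j)
    (hmom : ∑ j : Fin n, (j : ℕ) * u j = ∑ j : Fin n, (j : ℕ) * v j) : u = v := by
  have single (w : Fin n → ℕ) (hw : ∑ j, w j * u j = ∑ j, w j * v j) (j₀ : Fin n)
      (hne : ∀ j ≠ j₀, w j * u j = w j * v j) : w j₀ * u j₀ = w j₀ * v j₀ := by
    rw [← add_sum_erase _ _ (mem_univ j₀), ← add_sum_erase _ _ (mem_univ j₀),
      sum_congr rfl fun j hj => hne j (ne_of_mem_erase hj)] at hw
    omega
  have h1 (j₀ : Fin n) (hj₀ : (j₀ : ℕ) = 1) : u j₀ = v j₀ := by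
    simpa [hj₀] using single (fun j => j) hmom j₀ fun j hj => by
      obtain h0 | h1 | h2 : (j : ℕ) = 0 ∨ (j : ℕ) = 1 ∨ 2 ≤ (j : ℕ) := by omega
      · simp [h0]
      · exact absurd (Fin.ext (h1.trans hj₀.symm)) hj
      · rw [h j h2]
  funext j₀
  obtain h0 | h1' | h2 : (j₀ : ℕ) = 0 ∨ (j₀ : ℕ) = 1 ∨ 2 ≤ (j₀ : ℕ) := by omega
  · simpa using single 1 (by simpa using hsum) j₀ fun j hj => by
      obtain h1'' | h2 : (j : ℕ) = 1 ∨ 2 ≤ (j : ℕ) := by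
        have : (j : ℕ) ≠ 0 := fun e => hj (Fin.ext (e.trans h0.symm))
        omega
      · rw [Pi.one_apply, h1 j h1'']
      · rw [Pi.one_apply, h j h2]
  · exact h1 j₀ h1'
  · exact h j₀ h2

end Counting

section PairB

variable {n : ℕ}

def pairBFst (n : ℕ) : Fin n → ℕ := fun i =>
  if (i : ℕ) = 0 then n - 4 else if (i : ℕ) = 1 then 3 else if (i : ℕ) = n - 3 then 1 else 0

def pairBSnd (n : ℕ) : Fin n → ℕ := fun i =>
  if (i : ℕ) = 0 then n - 3 else if (i : ℕ) = 1 then 1 else if (i : ℕ) = 3 then 1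
  else if (i : ℕ) = n - 4 then 1 else 0

theorem amicableCaseB_iff {x x' : Fin n → ℕ} :
    amicableCaseB n x x' ↔ 8 ≤ n ∧ x = pairBFst n ∧ x' = pairBSnd n := by
  simp only [amicableCaseB, funext_iff, pairBFst, pairBSnd]

theorem pairBFst_lt (h : 5 ≤ n) (i : Fin n) : pairBFst n i < n := by
  unfold pairBFst; split_ifs <;> omega

theorem pairBSnd_lt (h : 4 ≤ n) (i : Fin n) : pairBSnd n i < n := by
  unfold pairBSnd; split_ifs <;> omega

theorem sum_pairBFst (h : 5 ≤ n) : ∑ i, pairBFst n i = n := by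
  have e (i : Fin n) : pairBFst n i = (if (i : ℕ) = 0 then n - 4 else 0) +
      (if (i : ℕ) = 1 then 3 else 0) + (if (i : ℕ) = n - 3 then 1 else 0) := by
    unfold pairBFst; split_ifs <;> omega
  simp only [e, sum_add_distrib, Fin.sum_ite_val_eq (by omega : 0 < n),
    Fin.sum_ite_val_eq (by omega : 1 < n), Fin.sum_ite_val_eq (by omega : n - 3 < n)]
  omega

theorem sum_mul_pairBFst (h : 5 ≤ n) : ∑ i : Fin n, (i : ℕ) * pairBFst n i = n := by
  have e (i : Fin n) : (i : ℕ) * pairBFst n i =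
      (if (i : ℕ) = 1 then 3 else 0) + (if (i : ℕ) = n - 3 then n - 3 else 0) := by
    unfold pairBFst; split_ifs <;> grind
  simp only [e, sum_add_distrib, Fin.sum_ite_val_eq (by omega : 1 < n),
    Fin.sum_ite_val_eq (by omega : n - 3 < n)]
  omega

theorem sum_pairBSnd (h : 8 ≤ n) : ∑ i, pairBSnd n i = n := by
  have e (i : Fin n) : pairBSnd n i = (if (i : ℕ) = 0 then n - 3 else 0) +
      (if (i : ℕ) = 1 then 1 else 0) + (if (i : ℕ) = 3 then 1 else 0) +
      (if (i : ℕ) = n - 4 then 1 else 0) := by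
    unfold pairBSnd; split_ifs <;> omega
  simp only [e, sum_add_distrib, Fin.sum_ite_val_eq (by omega : 0 < n),
    Fin.sum_ite_val_eq (by omega : 1 < n), Fin.sum_ite_val_eq (by omega : 3 < n),
    Fin.sum_ite_val_eq (by omega : n - 4 < n)]
  omega

theorem sum_mul_pairBSnd (h : 8 ≤ n) : ∑ i : Fin n, (i : ℕ) * pairBSnd n i = n := by
  have e (i : Fin n) : (i : ℕ) * pairBSnd n i = (if (i : ℕ) = 1 then 1 else 0) +
      (if (i : ℕ) = 3 then 3 else 0) + (if (i : ℕ) = n - 4 then n - 4 else 0) := by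
    unfold pairBSnd; split_ifs <;> grind
  simp only [e, sum_add_distrib, Fin.sum_ite_val_eq (by omega : 1 < n),
    Fin.sum_ite_val_eq (by omega : 3 < n), Fin.sum_ite_val_eq (by omega : n - 4 < n)]
  omega

theorem countOp_pairBFst (h : 8 ≤ n) : countOp n (pairBFst n) = pairBSnd n := by
  refine eq_of_sum_eq_of_sum_mul_eq (fun j hj => ?_) ?_ ?_
  · rw [countOp_eq_ite_add_ite_of_le_one (p := ⟨0, by omega⟩) (q := ⟨1, by omega⟩)
      (by simp [Fin.ext_iff]) (fun i h0 h1 => ?_) hj]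
    · simp only [pairBFst, pairBSnd, ↓reduceIte, one_ne_zero]
      split_ifs <;> omega
    · simp only [ne_eq, Fin.ext_iff] at h0 h1
      unfold pairBFst; split_ifs <;> omega
  · rw [sum_countOp_s10 (pairBFst_lt (by omega)), sum_pairBSnd h]
  · rw [sum_mul_countOp (pairBFst_lt (by omega)), sum_pairBFst (by omega), sum_mul_pairBSnd h]

theorem countOp_pairBSnd (h : 8 ≤ n) : countOp n (pairBSnd n) = pairBFst n := by
  refine eq_of_sum_eq_of_sum_mul_eq (fun j hj => ?_) ?_ ?_
  · rw [countOp_eq_ite_of_le_one (p := ⟨0, by omega⟩) (fun i h0 => ?_) hj]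
    · simp only [pairBFst, pairBSnd, ↓reduceIte]
      split_ifs <;> omega
    · simp only [ne_eq, Fin.ext_iff] at h0
      unfold pairBSnd; split_ifs <;> omega
  · rw [sum_countOp_s10 (pairBSnd_lt (by omega)), sum_pairBFst (by omega)]
  · rw [sum_mul_countOp (pairBSnd_lt (by omega)), sum_pairBSnd h, sum_mul_pairBFst (by omega)]

end PairB

section Amicable

variable {n : ℕ} {x x' : Fin n → ℕ}

theorem eq_pairBFst_of_le_one [NeZero n] (hx : ∀ i, x i < n) (hx' : ∀ i, x' i < n)
    (hxx' : countOp n x = x') (hx'x : countOp n x' = x) (ha : 0 < x 0)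
    (hb : x' 0 = x 0 + 1) (hle : ∀ i ≠ 0, x' i ≤ 1) : 5 ≤ n ∧ x = pairBFst n := by
  set a := x 0
  set b := x' 0
  have hbn : b < n := hx' 0
  have hn : 1 < n := by omega
  have hsum : ∑ i, x i = n := hx'x ▸ sum_countOp_s10 hx'
  have hsum' : ∑ i, x' i = n := hxx' ▸ sum_countOp_s10 hx
  have hx_ge_two (j : Fin n) (hj : 2 ≤ (j : ℕ)) : x j = if b = j then 1 else 0 := by
    rw [← hx'x, countOp_eq_ite_of_le_one hle hj]
  have hx1 : x ⟨1, hn⟩ = 3 := by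
    have hex := tsub_one_add_sum_erase_zero hsum
    rw [hxx', sum_eq_single_of_mem (⟨1, hn⟩ : Fin n) (by simp [Fin.ext_iff]) fun j hj hj1 => ?_]
      at hex
    · omega
    · have : 2 ≤ (j : ℕ) := by
        simp only [mem_erase, ne_eq, Fin.ext_iff, Fin.val_zero] at hj hj1
        omega
      rw [hx_ge_two j this]
      split_ifs <;> rfl
  have hnb : n = b + 3 := by
    have hmom := sum_mul_countOp hx'
    rw [hx'x, hsum', sum_eq_add (⟨1, hn⟩ : Fin n) ⟨b, hbn⟩
      (by simp [Fin.ext_iff]; omega) (fun j _ hj => ?_) (by simp) (by simp)] at hmom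
    · rw [hx1, hx_ge_two ⟨b, hbn⟩ (by simp only; omega), if_pos rfl] at hmom
      simp only [mul_one] at hmom
      omega
    · simp only [ne_eq, Fin.ext_iff] at hj
      obtain h0 | h2 : (j : ℕ) = 0 ∨ 2 ≤ (j : ℕ) := by omega
      · rw [h0, zero_mul]
      · rw [hx_ge_two j h2, if_neg (Ne.symm hj.2), mul_zero]
  refine ⟨by omega, funext fun j => ?_⟩
  unfold pairBFst
  split_ifs with h0 h1 h3
  · rw [show j = 0 from Fin.ext h0]; omega
  · rw [show j = ⟨1, hn⟩ from Fin.ext h1, hx1]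
  · rw [hx_ge_two j (by omega), if_pos (by omega)]
  · rw [hx_ge_two j (by omega), if_neg (by omega)]

theorem caseA_or_caseB_of_le_one [NeZero n] (hx : ∀ i, x i < n) (hx' : ∀ i, x' i < n)
    (hxx' : countOp n x = x') (hx'x : countOp n x' = x) (ha : 0 < x 0)
    (hb : x' 0 = x 0 + 1) (hle : ∀ i ≠ 0, x' i ≤ 1) :
    amicableCaseA n x x' ∨ amicableCaseB n x x' := by
  obtain ⟨h5, rfl⟩ := eq_pairBFst_of_le_one hx hx' hxx' hx'x ha hb hle
  subst hxx'
  rcases Nat.lt_or_ge n 8 with h8 | h8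
  · interval_cases n
    · exact absurd hx'x (by decide)
    · exact Or.inl ⟨rfl, by decide, by decide⟩
    · exact absurd hx'x (by decide)
  · exact Or.inr (amicableCaseB_iff.mpr ⟨h8, rfl, countOp_pairBFst h8⟩)

theorem eq_of_sum_erase_zero_tsub_one_eq_one [NeZero n] (hx : ∀ i, x i < n)
    (hx' : ∀ i, x' i < n) (hxx' : countOp n x = x') (hx'x : countOp n x' = x) (h0 : x 0 = x' 0)
    (hA : ∑ i ∈ univ.erase 0, (x i - 1) = 1) (hB : ∑ i ∈ univ.erase 0, (x' i - 1) = 1) :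
    x = x' := by
  obtain ⟨i₀, hi₀, hxi₀, hle⟩ := exists_eq_two_of_sum_tsub_one_eq_one hA
  obtain ⟨j₀, hj₀, hx'j₀, hle'⟩ := exists_eq_two_of_sum_tsub_one_eq_one hB
  have hsum : ∑ i, x i = n := hx'x ▸ sum_countOp_s10 hx'
  have hsum' : ∑ i, x' i = n := hxx' ▸ sum_countOp_s10 hx
  have hmom : ∑ j : Fin n, (j : ℕ) * x j = n := by rw [← hx'x, sum_mul_countOp hx', hsum']
  have hmom' : ∑ j : Fin n, (j : ℕ) * x' j = n := by rw [← hxx', sum_mul_countOp hx, hsum]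
  refine eq_of_sum_eq_of_sum_mul_eq (fun j hj => ?_) (hsum.trans hsum'.symm)
    (hmom.trans hmom'.symm)
  rw [← congrFun hx'x j, ← congrFun hxx' j,
    countOp_eq_ite_add_ite_of_le_one (ne_of_mem_erase hj₀).symm
      (fun i hi0 hi => hle' i (mem_erase.mpr ⟨hi0, mem_univ i⟩) hi) hj,
    countOp_eq_ite_add_ite_of_le_one (ne_of_mem_erase hi₀).symm
      (fun i hi0 hi => hle i (mem_erase.mpr ⟨hi0, mem_univ i⟩) hi) hj,
    h0, hxi₀, hx'j₀]

theorem caseA_or_caseB_of_amicable [NeZero n] (h1 : 1 < n) (hx : ∀ i, x i < n)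
    (hx' : ∀ i, x' i < n) (hxx' : countOp n x = x') (hx'x : countOp n x' = x) (hne : x ≠ x') :
    amicableCaseA n x x' ∨ amicableCaseA n x' x ∨ amicableCaseB n x x' ∨ amicableCaseB n x' x := by
  have hsum : ∑ i, x i = n := hx'x ▸ sum_countOp_s10 hx'
  have hsum' : ∑ i, x' i = n := hxx' ▸ sum_countOp_s10 hx
  have ha : 0 < x 0 := hx'x ▸ countOp_zero_pos h1 hsum' (hx'x ▸ hx _)
  have hb : 0 < x' 0 := hxx' ▸ countOp_zero_pos h1 hsum (hxx' ▸ hx' _)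
  have hexA := tsub_one_add_sum_erase_zero hsum
  have hexB := tsub_one_add_sum_erase_zero hsum'
  rw [hxx'] at hexA
  rw [hx'x] at hexB
  have le_one_of_eq_zero {y : Fin n → ℕ} (h : ∑ i ∈ univ.erase 0, (y i - 1) = 0) (i : Fin n)
      (hi : i ≠ 0) : y i ≤ 1 := by
    have := sum_eq_zero_iff.mp h i (mem_erase.mpr ⟨hi, mem_univ i⟩)
    omega
  obtain hB | hA | ⟨hA, hB⟩ : ∑ i ∈ univ.erase 0, (x' i - 1) = 0 ∨
      ∑ i ∈ univ.erase 0, (x i - 1) = 0 ∨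
      (∑ i ∈ univ.erase 0, (x i - 1) = 1 ∧ ∑ i ∈ univ.erase 0, (x' i - 1) = 1) := by omega
  · have := caseA_or_caseB_of_le_one hx hx' hxx' hx'x ha (by omega) (le_one_of_eq_zero hB)
    tauto
  · have := caseA_or_caseB_of_le_one hx' hx hx'x hxx' hb (by omega) (le_one_of_eq_zero hA)
    tauto
  · exact absurd (eq_of_sum_erase_zero_tsub_one_eq_one hx hx' hxx' hx'x (by omega) hA hB) hne

theorem amicable_of_caseA (h : amicableCaseA n x x') : countOp n x = x' ∧ countOp n x' = x := by
  obtain ⟨rfl, hx, hx'⟩ := h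
  rw [funext hx, funext hx']
  decide

theorem amicable_of_caseB (h : amicableCaseB n x x') : countOp n x = x' ∧ countOp n x' = x := by
  obtain ⟨h8, rfl, rfl⟩ := amicableCaseB_iff.mp h
  exact ⟨countOp_pairBFst h8, countOp_pairBSnd h8⟩

end Amicable

theorem amicable_chains_classification_general (n : ℕ) (x x' : Fin n → ℕ)
    (hx : ∀ i, x i < n) (hx' : ∀ i, x' i < n) (hne : x ≠ x') :
    (countOp n x = x' ∧ countOp n x' = x) ↔
      (amicableCaseA n x x' ∨ amicableCaseA n x' x ∨
       amicableCaseB n x x' ∨ amicableCaseB n x' x) := by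
  constructor
  · rintro ⟨hxx', hx'x⟩
    rcases Nat.lt_or_ge n 2 with hn | hn
    · exact absurd (funext fun i => by have := hx i; have := hx' i; omega) hne
    · have : NeZero n := ⟨by omega⟩
      exact caseA_or_caseB_of_amicable hn hx hx' hxx' hx'x hne
  · rintro (h | h | h | h)
    · exact amicable_of_caseA h
    · exact (amicable_of_caseA h).symm
    · exact amicable_of_caseB h
    · exact (amicable_of_caseB h).symm

theorem amicable_chains_classification (n : ℕ) (hn : 1 ≤ n) (x x' : Fin n → ℕ)
    (hx : ∀ i, x i < n) (hx' : ∀ i, x' i < n) (hne : x ≠ x') :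
    (countOp n x = x' ∧ countOp n x' = x) ↔
      (amicableCaseA n x x' ∨ amicableCaseA n x' x ∨
       amicableCaseB n x x' ∨ amicableCaseB n x' x) :=
  amicable_chains_classification_general n x x' hx hx' hne
end
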